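/- For the annulus Ω_r = {r < |z| < 1}, the Bergman metric at r^{1/5} satisfies lim_{r→0⁺} F_B^{Ω_r}(r^{1/5},1)²/log(1/r) = 2. -/

import Mathlib

open Real Filter Topology

/-- `β₀(r,t) = B_r(t,t)`: diagonal Bergman kernel of the annulus `{r < |z| < 1}` at a point
of modulus `t`:
`B_r(z,z) = (1/π)[Σ_{n≠-1} (n+1)|z|^{2n}/(1-r^{2n+2}) + |z|⁻²/(2 log(1/r))]`. -/
noncomputable def beta0 (r t : ℝ) : ℝ :=
  (1/π) * ∑' n : ℤ, if n = -1 then t ^ (-2 : ℤ) / (2 * Real.log (1/r))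
    else ((n : ℝ) + 1) * t ^ (2*n) / (1 - r ^ (2*n+2))

/-- `β₁(r,t) = ∂_z B_r(z,z)` at `z = t > 0`. -/
noncomputable def beta1 (r t : ℝ) : ℝ :=
  (1/π) * ∑' n : ℤ, if n = -1 then -(t ^ (-3 : ℤ)) / (2 * Real.log (1/r))
    else ((n : ℝ) + 1) * (n : ℝ) * t ^ (2*n-1) / (1 - r ^ (2*n+2))

/-- `β₂(r,t) = ∂_z∂_z̄ B_r(z,z)` at `z = t > 0`. -/
noncomputable def beta2 (r t : ℝ) : ℝ :=
  (1/π) * ∑' n : ℤ, if n = -1 then t ^ (-4 : ℤ) / (2 * Real.log (1/r))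
    else ((n : ℝ) + 1) * (n : ℝ)^2 * t ^ (2*n-2) / (1 - r ^ (2*n+2))

/-- The squared Bergman metric of the annulus at the point `t` in the unit direction:
`F_B(t,1)² = (β₀β₂ - β₁²)/β₀²`. -/
noncomputable def bergmanMetricSq (r t : ℝ) : ℝ :=
  (beta0 r t * beta2 r t - (beta1 r t)^2) / (beta0 r t)^2

/-! Put `r = s⁵`, `t = s`. Apart from the logarithmic term `n = -1`, every summand of the three
series is `c sᵖ / (1 - s^q)` with `q ≠ 0`; for `q < 0` the same term equals
`-c s^(p-q) / (1 - s^(-q))`, so all exponents can be taken nonnegative. On `0 < s ≤ 1/2` the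
summands are then dominated by `8 (|n| + 1)³ 4^(-|n|)` and converge termwise, so the regular
parts `A, B, C` of `β₀, β₁, β₂` tend to `1, 0, 2`. The logarithmic contributions to `β₀β₂` and
`β₁²` cancel, leaving `F²/L = (2(s²C + A + 2sB) + 4Ls⁴(AC - B²)) / (1 + 2Ls²A)²` with
`L = log (1/r)`, which tends to `2` because `L sᵏ → 0` for `k > 0`. -/

section powDivOneSubPow

noncomputable def powDivOneSubPow (c : ℝ) (p q : ℤ) (s : ℝ) : ℝ := c * s ^ p / (1 - s ^ q)

variable {c s : ℝ} {p q : ℤ}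

theorem powDivOneSubPow_eq_neg (hs : s ≠ 0) :
    powDivOneSubPow c p q s = powDivOneSubPow (-c) (p - q) (-q) s := by
  unfold powDivOneSubPow
  rcases eq_or_ne (s ^ q) 1 with h | h
  · simp [h, zpow_neg]
  · have h' : 1 - s ^ q ≠ 0 := sub_ne_zero.2 (Ne.symm h)
    have h'' : 1 - (s ^ q)⁻¹ ≠ 0 := by
      rwa [sub_ne_zero, ne_comm, inv_ne_one]
    rw [zpow_sub₀ hs, zpow_neg]
    field_simp
    ring

theorem tendsto_powDivOneSubPow (hp : 0 ≤ p) (hq : 0 < q) :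
    Tendsto (powDivOneSubPow c p q) (𝓝[>] 0) (𝓝 (if p = 0 then c else 0)) := by
  have hcont : ContinuousAt (powDivOneSubPow c p q) 0 := by
    refine ContinuousAt.div (continuousAt_const.mul (continuousAt_zpow₀ _ _ (.inr hp)))
      (continuousAt_const.sub (continuousAt_zpow₀ _ _ (.inr hq.le))) ?_
    simp [zero_zpow q hq.ne']
  have hval : powDivOneSubPow c p q 0 = if p = 0 then c else 0 := by
    simp [powDivOneSubPow, zero_zpow q hq.ne', zero_zpow_eq]
  exact hval ▸ hcont.tendsto.mono_left nhdsWithin_le_nhds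

theorem abs_powDivOneSubPow_le (hp : 0 ≤ p) (hq : 0 < q) (hs : 0 < s) (hs2 : s ≤ 1 / 2) :
    |powDivOneSubPow c p q s| ≤ 2 * |c| * (1 / 2) ^ p := by
  have hsq : s ^ q ≤ 1 / 2 := calc
    s ^ q ≤ s ^ (1 : ℤ) := zpow_le_zpow_right_of_le_one₀ hs (by linarith) hq
    _ ≤ 1 / 2 := by simpa using hs2
  have hsp : s ^ p ≤ (1 / 2) ^ p := zpow_le_zpow_left₀ hp hs.le hs2
  rw [powDivOneSubPow, abs_div, abs_mul, abs_of_pos (zpow_pos hs p),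
    abs_of_pos (by linarith : (0 : ℝ) < 1 - s ^ q), div_le_iff₀ (by linarith)]
  calc |c| * s ^ p ≤ |c| * (1 / 2) ^ p := mul_le_mul_of_nonneg_left hsp (abs_nonneg c)
    _ = 2 * |c| * (1 / 2) ^ p * (1 / 2) := by ring
    _ ≤ 2 * |c| * (1 / 2) ^ p * (1 - s ^ q) := by gcongr; linarith

end powDivOneSubPow

theorem tsum_ite_eq_add_tsum_ite {β α : Type*} [AddCommGroup α] [TopologicalSpace α]
    [IsTopologicalAddGroup α] [T2Space α] [DecidableEq β] {f : β → α} (b : β) (a : α)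
    (hf : Summable fun n => if n = b then 0 else f n) :
    ∑' n, (if n = b then a else f n) = a + ∑' n, if n = b then 0 else f n := by
  convert (hf.hasSum.update b a).tsum_eq using 1
  · congr 1
    ext n
    by_cases h : n = b <;> simp [h]
  · simp

/-- The summands of `beta0`, `beta1`, `beta2` (`k = 0, 1, 2`) with the logarithmic term
`n = -1` removed. -/
noncomputable def regularTerm (k : ℕ) (r t : ℝ) (n : ℤ) : ℝ :=
  if n = -1 then 0 else ((n : ℝ) + 1) * (n : ℝ) ^ k * t ^ (2 * n - k) / (1 - r ^ (2 * n + 2))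

section BergmanSeries

variable {r t : ℝ}

theorem beta0_eq (h : Summable (regularTerm 0 r t)) :
    beta0 r t = 1 / π * (t ^ (-2 : ℤ) / (2 * log (1 / r)) + ∑' n, regularTerm 0 r t n) := by
  have hreg : (fun n : ℤ => if n = -1 then 0 else ((n : ℝ) + 1) * t ^ (2 * n) /
      (1 - r ^ (2 * n + 2))) = regularTerm 0 r t := by
    ext n; simp [regularTerm]
  rw [beta0, tsum_ite_eq_add_tsum_ite _ _ (hreg ▸ h), hreg]

theorem beta1_eq (h : Summable (regularTerm 1 r t)) :
    beta1 r t = 1 / π * (-t ^ (-3 : ℤ) / (2 * log (1 / r)) + ∑' n, regularTerm 1 r t n) := by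
  have hreg : (fun n : ℤ => if n = -1 then 0 else ((n : ℝ) + 1) * n * t ^ (2 * n - 1) /
      (1 - r ^ (2 * n + 2))) = regularTerm 1 r t := by
    ext n; simp [regularTerm]
  rw [beta1, tsum_ite_eq_add_tsum_ite _ _ (hreg ▸ h), hreg]

theorem beta2_eq (h : Summable (regularTerm 2 r t)) :
    beta2 r t = 1 / π * (t ^ (-4 : ℤ) / (2 * log (1 / r)) + ∑' n, regularTerm 2 r t n) := by
  have hreg : (fun n : ℤ => if n = -1 then 0 else ((n : ℝ) + 1) * n ^ 2 * t ^ (2 * n - 2) /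
      (1 - r ^ (2 * n + 2))) = regularTerm 2 r t := by
    ext n; simp [regularTerm]
  rw [beta2, tsum_ite_eq_add_tsum_ite _ _ (hreg ▸ h), hreg]

/-- The leading terms `t⁻⁶/(4L²)` of `β₀β₂` and `β₁²` cancel. -/
theorem bergmanMetricSq_div_log_eq {A B C : ℝ} (ht : t ≠ 0) (hL : log (1 / r) ≠ 0)
    (h0 : beta0 r t = 1 / π * (t ^ (-2 : ℤ) / (2 * log (1 / r)) + A))
    (h1 : beta1 r t = 1 / π * (-t ^ (-3 : ℤ) / (2 * log (1 / r)) + B))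
    (h2 : beta2 r t = 1 / π * (t ^ (-4 : ℤ) / (2 * log (1 / r)) + C))
    (hA : 1 + 2 * (log (1 / r) * t ^ 2) * A ≠ 0) :
    bergmanMetricSq r t / log (1 / r) =
      (2 * (t ^ 2 * C + A + 2 * t * B) + 4 * (log (1 / r) * t ^ 4) * (A * C - B ^ 2)) /
        (1 + 2 * (log (1 / r) * t ^ 2) * A) ^ 2 := by
  set L := log (1 / r)
  have hβ : t ^ (-2 : ℤ) / (2 * L) + A ≠ 0 := by
    rw [show t ^ (-2 : ℤ) / (2 * L) + A = (1 + 2 * (L * t ^ 2) * A) / (2 * L * t ^ 2) by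
      rw [zpow_neg]; field_simp]
    exact div_ne_zero hA (by positivity)
  rw [bergmanMetricSq, h0, h1, h2]
  simp only [zpow_neg] at hβ ⊢
  field_simp
  ring

end BergmanSeries

noncomputable def majorant (n : ℤ) : ℝ := 8 * ((n.natAbs : ℝ) + 1) ^ 3 * (1 / 4) ^ n.natAbs

theorem majorant_nonneg (n : ℤ) : 0 ≤ majorant n := by
  unfold majorant; positivity

theorem summable_majorant : Summable majorant := by
  have hnat : Summable fun m : ℕ => 8 * ((m : ℝ) + 1) ^ 3 * (1 / 4) ^ m := by
    have h := (summable_nat_add_iff 1).2 <| summable_pow_mul_geometric_of_norm_lt_one (R := ℝ) 3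
      (r := 1 / 4) (by norm_num)
    refine (h.mul_left 32).congr fun m => ?_
    push_cast
    ring
  exact .of_nat_of_neg (by simpa [majorant] using hnat) (by simpa [majorant] using hnat)

theorem two_mul_abs_mul_le_majorant {n p : ℤ} {c : ℝ} (hc : |c| ≤ ((n.natAbs : ℝ) + 1) ^ 3)
    (hp : 2 * (n.natAbs : ℤ) - 2 ≤ p) : 2 * |c| * (1 / 2) ^ p ≤ majorant n := by
  have hhalf : (1 / 2 : ℝ) ^ p ≤ 4 * (1 / 4) ^ n.natAbs := calc
    (1 / 2 : ℝ) ^ p ≤ (1 / 2) ^ (2 * (n.natAbs : ℤ) - 2) :=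
      zpow_le_zpow_right_of_le_one₀ (by norm_num) (by norm_num) hp
    _ = 4 * (1 / 4) ^ n.natAbs := by
      rw [zpow_sub₀ (by norm_num), zpow_mul, zpow_natCast]
      norm_num
      ring
  calc 2 * |c| * (1 / 2) ^ p ≤ 2 * ((n.natAbs : ℝ) + 1) ^ 3 * (4 * (1 / 4) ^ n.natAbs) := by
        gcongr
    _ = majorant n := by rw [majorant]; ring

theorem abs_add_one_mul_pow_le {k : ℕ} (hk : k ≤ 2) (n : ℤ) :
    |((n : ℝ) + 1) * (n : ℝ) ^ k| ≤ ((n.natAbs : ℝ) + 1) ^ 3 := by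
  have hn : (n.natAbs : ℝ) = |(n : ℝ)| := by rw [Nat.cast_natAbs, Int.cast_abs]
  rw [abs_mul, abs_pow, hn]
  have h1 : |(n : ℝ) + 1| ≤ |(n : ℝ)| + 1 := by simpa using abs_add_le (n : ℝ) 1
  calc |(n : ℝ) + 1| * |(n : ℝ)| ^ k ≤ (|(n : ℝ)| + 1) * (|(n : ℝ)| + 1) ^ k := by
        gcongr; linarith
    _ = (|(n : ℝ)| + 1) ^ (k + 1) := by ring
    _ ≤ (|(n : ℝ)| + 1) ^ 3 :=
        pow_le_pow_right₀ (by linarith [abs_nonneg (n : ℝ)]) (by omega)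

section FifthPower

variable {k : ℕ} {s : ℝ} {n : ℤ}

theorem regularTerm_fifth_pow (hn : n ≠ -1) :
    regularTerm k (s ^ 5) s n =
      powDivOneSubPow ((n + 1) * n ^ k) (2 * n - k) (10 * n + 10) s := by
  rw [regularTerm, if_neg hn, powDivOneSubPow, ← zpow_natCast s 5, ← zpow_mul]
  ring_nf

theorem regularTerm_fifth_pow_of_lt (hn : n < -1) (hs : s ≠ 0) :
    regularTerm k (s ^ 5) s n =
      powDivOneSubPow (-((n + 1) * n ^ k)) (-8 * n - 10 - k) (-10 * n - 10) s := by
  rw [regularTerm_fifth_pow hn.ne, powDivOneSubPow_eq_neg hs]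
  ring_nf

theorem regularTerm_zero (hk : k ≠ 0) (r t : ℝ) : regularTerm k r t 0 = 0 := by
  simp [regularTerm, hk]

theorem tendsto_regularTerm_fifth_pow (hk : k ≤ 2) (n : ℤ) :
    Tendsto (fun s => regularTerm k (s ^ 5) s n) (𝓝[>] 0)
      (𝓝 (if 2 * n = k then ((n : ℝ) + 1) * n ^ k else 0)) := by
  rcases lt_trichotomy n (-1) with hn | rfl | hn
  · have h := tendsto_powDivOneSubPow (c := -((n + 1) * n ^ k)) (p := -8 * n - 10 - k)
      (q := -10 * n - 10) (by omega) (by omega)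
    rw [if_neg (by omega)] at h
    rw [if_neg (by omega)]
    refine h.congr' ?_
    filter_upwards [self_mem_nhdsWithin] with s hs
    exact (regularTerm_fifth_pow_of_lt hn (ne_of_gt hs)).symm
  · simp [regularTerm, show (-2 : ℤ) ≠ k by omega]
  · by_cases hp : 2 * n < k
    · obtain rfl : n = 0 := by omega
      simp [regularTerm_zero (show k ≠ 0 by omega), show (0 : ℤ) ≠ k by omega]
    · simp_rw [regularTerm_fifth_pow (show n ≠ -1 by omega), ← sub_eq_zero (a := 2 * n)]
      exact tendsto_powDivOneSubPow (by omega) (by omega)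

theorem abs_regularTerm_fifth_pow_le (hk : k ≤ 2) (hs : 0 < s) (hs2 : s ≤ 1 / 2) (n : ℤ) :
    |regularTerm k (s ^ 5) s n| ≤ majorant n := by
  rcases lt_trichotomy n (-1) with hn | rfl | hn
  · rw [regularTerm_fifth_pow_of_lt hn hs.ne']
    refine (abs_powDivOneSubPow_le (by omega) (by omega) hs hs2).trans
      (two_mul_abs_mul_le_majorant ?_ (by omega))
    simpa only [abs_neg] using abs_add_one_mul_pow_le hk n
  · simpa [regularTerm] using majorant_nonneg (-1)
  · by_cases hp : 2 * n < k
    · obtain rfl : n = 0 := by omega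
      simpa [regularTerm_zero (show k ≠ 0 by omega)] using majorant_nonneg 0
    · rw [regularTerm_fifth_pow (by omega)]
      exact (abs_powDivOneSubPow_le (by omega) (by omega) hs hs2).trans
        (two_mul_abs_mul_le_majorant (abs_add_one_mul_pow_le hk n) (by omega))

theorem summable_regularTerm_fifth_pow (hk : k ≤ 2) (hs : 0 < s) (hs2 : s ≤ 1 / 2) :
    Summable (regularTerm k (s ^ 5) s) :=
  summable_majorant.of_norm_bounded fun n => abs_regularTerm_fifth_pow_le hk hs hs2 n

theorem tendsto_tsum_regularTerm_fifth_pow (hk : k ≤ 2) :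
    Tendsto (fun s => ∑' n, regularTerm k (s ^ 5) s n) (𝓝[>] 0)
      (𝓝 (if k % 2 = 0 then ((k / 2 : ℕ) + 1 : ℝ) * ((k / 2 : ℕ) : ℝ) ^ k else 0)) := by
  have h := tendsto_tsum_of_dominated_convergence summable_majorant
    (tendsto_regularTerm_fifth_pow hk) <| by
      filter_upwards [Ioc_mem_nhdsGT (by norm_num : (0 : ℝ) < 1 / 2)] with s hs n
      exact abs_regularTerm_fifth_pow_le hk hs.1 hs.2 n
  rw [tsum_eq_single ((k / 2 : ℕ) : ℤ) fun n hn => if_neg (by omega)] at h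
  convert h using 2
  split_ifs <;> first | omega | push_cast; rfl

end FifthPower

theorem tendsto_log_one_div_pow_mul_pow (m : ℕ) {k : ℕ} (hk : k ≠ 0) :
    Tendsto (fun s : ℝ => log (1 / s ^ m) * s ^ k) (𝓝[>] 0) (𝓝 0) := by
  have h := (tendsto_log_mul_rpow_nhdsGT_zero (r := k) (by positivity)).const_mul (-(m : ℝ))
  rw [mul_zero] at h
  refine h.congr fun s => ?_
  rw [one_div, log_inv, log_pow, rpow_natCast]
  ring

theorem tendsto_bergmanMetricSq_fifth_pow_div_log :
    Tendsto (fun s : ℝ => bergmanMetricSq (s ^ 5) s / log (1 / s ^ 5)) (𝓝[>] 0) (𝓝 2) := by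
  have hA := tendsto_tsum_regularTerm_fifth_pow (k := 0) (by norm_num)
  have hB := tendsto_tsum_regularTerm_fifth_pow (k := 1) (by norm_num)
  have hC := tendsto_tsum_regularTerm_fifth_pow (k := 2) (by norm_num)
  norm_num at hA hB hC
  have hid : Tendsto (fun s : ℝ => s) (𝓝[>] 0) (𝓝 0) := nhdsWithin_le_nhds
  have hden := ((tendsto_log_one_div_pow_mul_pow 5 (k := 2) two_ne_zero).const_mul 2).mul hA
    |>.const_add 1
  have hnum := ((((hid.pow 2).mul hC).add hA).add ((hid.const_mul 2).mul hB)).const_mul 2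
    |>.add (((tendsto_log_one_div_pow_mul_pow 5 (k := 4) four_ne_zero).const_mul 4).mul
      ((hA.mul hC).sub (hB.pow 2)))
  have hlim := hnum.div (hden.pow 2) (by norm_num)
  rw [show (2 * (0 ^ 2 * 2 + 1 + 2 * 0 * 0) + 4 * 0 * (1 * 2 - 0 ^ 2)) / (1 + 2 * 0 * 1) ^ 2
    = (2 : ℝ) by norm_num] at hlim
  refine hlim.congr' ?_
  filter_upwards [Ioo_mem_nhdsGT (by norm_num : (0 : ℝ) < 1 / 2),
    hden.eventually_ne (by norm_num : (1 + 2 * 0 * 1 : ℝ) ≠ 0)] with s ⟨hs, hs'⟩ hne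
  have hL : log (1 / s ^ 5) ≠ 0 := by
    rw [one_div, log_inv, log_pow]
    exact neg_ne_zero.2 (mul_ne_zero (by norm_num) (log_neg hs (by linarith)).ne)
  have hsum {k : ℕ} (hk : k ≤ 2) := summable_regularTerm_fifth_pow hk hs hs'.le
  exact (bergmanMetricSq_div_log_eq hs.ne' hL (beta0_eq (hsum (by norm_num)))
    (beta1_eq (hsum (by norm_num))) (beta2_eq (hsum le_rfl)) hne).symm

/-- For the annulus `Ω_r = {r < |z| < 1}`, the Bergman metric at `r^{1/5}` satisfies
`lim_{r→0⁺} F_B^{Ω_r}(r^{1/5},1)²/log(1/r) = 2`. -/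
theorem bergman_metric_annulus_at_fifth_root :
    Tendsto (fun r : ℝ => bergmanMetricSq r (r ^ ((1:ℝ)/5)) / Real.log (1/r))
      (𝓝[>] (0:ℝ)) (𝓝 2) := by
  have hroot : Tendsto (fun r : ℝ => r ^ ((1 : ℝ) / 5)) (𝓝[>] 0) (𝓝[>] 0) := by
    refine tendsto_nhdsWithin_iff.2 ⟨?_, ?_⟩
    · have h := continuousAt_rpow_const 0 ((1 : ℝ) / 5) (.inr (by norm_num))
      simpa using h.tendsto.mono_left nhdsWithin_le_nhds
    · filter_upwards [self_mem_nhdsWithin] with r hr using rpow_pos_of_pos hr _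
  refine (tendsto_bergmanMetricSq_fifth_pow_div_log.comp hroot).congr' ?_
  filter_upwards [self_mem_nhdsWithin] with r (hr : 0 < r)
  rw [Function.comp_apply, ← rpow_natCast, ← rpow_mul hr.le]
  norm_num
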